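/- For every integer d ≥ 1 and every k ∈ {1,…,d}, the entropy flux q_k is compatible with the entropy η in the sense of conservation laws: for every (p,u) with p > 0, u ∈ ℝ^d, the total (Fréchet) derivative of the map (p,u) ↦ q_k(p,u) at (p,u) equals Σ_{α=1}^{d+1} ω_α(p,u) times the total derivative of the map (p,u) ↦ F_k^{(α)}(p,u) at (p,u). (This is the chain-rule form, in primitive variables, of the compatibility relation ∇_w q_k^T = ∇_w η^T · D_w F_k.) -/

import Mathlib

open Real Finset

/-- Exact fluxes `F_k` of the ultra-relativistic Euler equations. -/
noncomputable def flux (d : ℕ) (k : Fin d) (p : ℝ) (u : Fin d → ℝ) : Fin (d + 1) → ℝ :=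
  Fin.snoc (fun i => p * (if i = k then 1 else 0) + 4 * p * u i * u k)
    (4 * p * u k * Real.sqrt (1 + ∑ j, u j ^ 2))

/-- Entropy variables (main field) of the ultra-relativistic Euler equations. -/
noncomputable def entropyVars (d : ℕ) (p : ℝ) (u : Fin d → ℝ) : Fin (d + 1) → ℝ :=
  Fin.snoc (fun i => -(1 / 4) * u i * p ^ (-(1 / 4) : ℝ))
    ((1 / 4) * p ^ (-(1 / 4) : ℝ) * Real.sqrt (1 + ∑ j, u j ^ 2))

/-- Entropy fluxes `q_k(p,u) = p^{3/4} u_k`. -/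
noncomputable def entropyFlux (d : ℕ) (k : Fin d) (p : ℝ) (u : Fin d → ℝ) : ℝ :=
  p ^ ((3 : ℝ) / 4) * u k

/-! Both sides are linear forms in the direction `v = (δp, δu)`. Evaluated at `v`, the momentum
components of `ω · DF_k v` contract to sums of `u_i²` and `u_i δu_i`, and these cancel against
the energy component because `√(1 + |u|²)² = 1 + |u|²`; what remains is
`p^{-1/4} ((3/4) δp u_k + p δu_k) = Dq_k v`. -/

theorem hasFDerivAt_snd_apply {𝕜 E F ι : Type*} [NontriviallyNormedField 𝕜]
    [NormedAddCommGroup E] [NormedSpace 𝕜 E] [NormedAddCommGroup F] [NormedSpace 𝕜 F]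
    [Fintype ι] (i : ι) (x : E × (ι → F)) :
    HasFDerivAt (fun y : E × (ι → F) => y.2 i)
      ((ContinuousLinearMap.proj i).comp (ContinuousLinearMap.snd 𝕜 E (ι → F))) x :=
  ((ContinuousLinearMap.proj i).comp (ContinuousLinearMap.snd 𝕜 E (ι → F))).hasFDerivAt

theorem hasFDerivAt_sqrt_one_add_sum_sq {E ι : Type*} [NormedAddCommGroup E] [NormedSpace ℝ E]
    [Fintype ι] (x : E × (ι → ℝ)) :
    HasFDerivAt (fun y : E × (ι → ℝ) => √(1 + ∑ j, y.2 j ^ 2))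
      ((√(1 + ∑ j, x.2 j ^ 2))⁻¹ •
        ∑ j, x.2 j • (ContinuousLinearMap.proj j).comp (ContinuousLinearMap.snd ℝ E (ι → ℝ))) x := by
  have h := ((hasFDerivAt_const (1 : ℝ) x).fun_add (HasFDerivAt.fun_sum (u := Finset.univ)
    fun j _ => (hasFDerivAt_snd_apply (𝕜 := ℝ) j x).pow 2)).sqrt (by positivity)
  refine h.congr_fderiv (ContinuousLinearMap.ext fun v => ?_)
  simp only [one_div, mul_inv_rev, Nat.add_one_sub_one, pow_one, nsmul_eq_mul, Nat.cast_ofNat,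
    zero_add, smul_apply, _root_.sum_apply, ContinuousLinearMap.comp_apply,
    ContinuousLinearMap.coe_snd', ContinuousLinearMap.proj_apply, smul_eq_mul]
  simp only [mul_assoc, ← Finset.mul_sum]
  ring

section

variable {d : ℕ} (k : Fin d) (p : ℝ) (u : Fin d → ℝ) (v : ℝ × (Fin d → ℝ))

theorem entropyVars_castSucc (i : Fin d) :
    entropyVars d p u i.castSucc = -(1 / 4) * p ^ (-(1 / 4) : ℝ) * u i := by
  simp only [entropyVars, Fin.snoc_castSucc]
  ring

theorem entropyVars_last :
    entropyVars d p u (Fin.last d) = 1 / 4 * p ^ (-(1 / 4) : ℝ) * √(1 + ∑ j, u j ^ 2) := by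
  simp only [entropyVars, Fin.snoc_last]

theorem fderiv_entropyFlux_apply (hp : 0 < p) :
    fderiv ℝ (fun x : ℝ × (Fin d → ℝ) => entropyFlux d k x.1 x.2) (p, u) v =
      3 / 4 * p ^ (-(1 / 4) : ℝ) * v.1 * u k + p ^ ((3 : ℝ) / 4) * v.2 k := by
  have h := (hasFDerivAt_fst.rpow_const (p := 3 / 4) (Or.inl hp.ne')).fun_mul
    (hasFDerivAt_snd_apply (𝕜 := ℝ) k (p, u))
  simp only [entropyFlux]
  rw [h.fderiv, show (3 : ℝ) / 4 - 1 = -(1 / 4) by norm_num]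
  simp only [add_apply, smul_apply, ContinuousLinearMap.comp_apply, ContinuousLinearMap.coe_snd',
    ContinuousLinearMap.proj_apply, ContinuousLinearMap.coe_fst', smul_eq_mul]
  ring

theorem fderiv_flux_castSucc_apply (i : Fin d) :
    fderiv ℝ (fun x : ℝ × (Fin d → ℝ) => flux d k x.1 x.2 i.castSucc) (p, u) v =
      v.1 * (if i = k then 1 else 0) + 4 * v.1 * u i * u k +
        4 * p * (v.2 i * u k + u i * v.2 k) := by
  have h := (hasFDerivAt_fst.mul_const (if i = k then (1 : ℝ) else 0)).fun_add
    (((hasFDerivAt_fst.const_mul 4).fun_mul (hasFDerivAt_snd_apply (𝕜 := ℝ) i (p, u))).fun_mul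
      (hasFDerivAt_snd_apply (𝕜 := ℝ) k (p, u)))
  simp only [flux, Fin.snoc_castSucc]
  rw [h.fderiv]
  simp only [add_apply, smul_apply, ContinuousLinearMap.comp_apply, ContinuousLinearMap.coe_snd',
    ContinuousLinearMap.proj_apply, ContinuousLinearMap.coe_fst', smul_eq_mul]
  ring

theorem sum_mul_fderiv_flux_castSucc_apply :
    ∑ i, u i * fderiv ℝ (fun x : ℝ × (Fin d → ℝ) => flux d k x.1 x.2 i.castSucc) (p, u) v =
      v.1 * u k + 4 * (v.1 * u k + p * v.2 k) * ∑ i, u i ^ 2 +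
        4 * p * u k * ∑ i, u i * v.2 i := by
  calc _ = ∑ i, (v.1 * u i * (if i = k then 1 else 0) +
          (4 * (v.1 * u k + p * v.2 k) * u i ^ 2 + 4 * p * u k * (u i * v.2 i))) :=
        Finset.sum_congr rfl fun i _ => by rw [fderiv_flux_castSucc_apply]; ring
    _ = _ := by
      rw [Finset.sum_add_distrib, Finset.sum_add_distrib, ← Finset.mul_sum, ← Finset.mul_sum]
      simp [add_assoc]

theorem fderiv_flux_last_apply :
    fderiv ℝ (fun x : ℝ × (Fin d → ℝ) => flux d k x.1 x.2 (Fin.last d)) (p, u) v =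
      4 * (v.1 * u k + p * v.2 k) * √(1 + ∑ j, u j ^ 2) +
        4 * p * u k * ((∑ j, u j * v.2 j) / √(1 + ∑ j, u j ^ 2)) := by
  have h := ((hasFDerivAt_fst.const_mul 4).fun_mul
    (hasFDerivAt_snd_apply (𝕜 := ℝ) k (p, u))).fun_mul (hasFDerivAt_sqrt_one_add_sum_sq (p, u))
  simp only [flux, Fin.snoc_last]
  rw [h.fderiv]
  simp only [add_apply, smul_apply, _root_.sum_apply, ContinuousLinearMap.comp_apply,
    ContinuousLinearMap.coe_snd', ContinuousLinearMap.proj_apply, ContinuousLinearMap.coe_fst',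
    smul_eq_mul, mul_assoc]
  ring

end

theorem entropyFlux_compatible_general (d : ℕ) (k : Fin d)
    (p : ℝ) (hp : 0 < p) (u : Fin d → ℝ) :
    fderiv ℝ (fun x : ℝ × (Fin d → ℝ) => entropyFlux d k x.1 x.2) (p, u) =
      ∑ α : Fin (d + 1), entropyVars d p u α •
        fderiv ℝ (fun x : ℝ × (Fin d → ℝ) => flux d k x.1 x.2 α) (p, u) := by
  refine ContinuousLinearMap.ext fun v => ?_
  have hr : √(1 + ∑ j, u j ^ 2) ^ 2 = 1 + ∑ j, u j ^ 2 := Real.sq_sqrt (by positivity)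
  have hp34 : p ^ ((3 : ℝ) / 4) = p ^ (-(1 / 4) : ℝ) * p := by
    rw [← Real.rpow_add_one hp.ne']
    norm_num
  rw [Fin.sum_univ_castSucc]
  simp only [add_apply, _root_.sum_apply, smul_apply, smul_eq_mul, entropyVars_castSucc,
    entropyVars_last, mul_assoc (-(1 / 4) * p ^ (-(1 / 4) : ℝ)), ← Finset.mul_sum,
    sum_mul_fderiv_flux_castSucc_apply, fderiv_entropyFlux_apply k p u v hp, fderiv_flux_last_apply,
    hp34]
  field_simp
  linear_combination (-4 * (p * v.2 k + u k * v.1)) * hr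

/-- Compatibility of the entropy flux with the entropy, in chain-rule form with
respect to the primitive variables `(p,u)`:
`D q_k = Σ_α ω_α D F_k^{(α)}` at every state with `p > 0`. -/
theorem entropyFlux_compatible (d : ℕ) (hd : 1 ≤ d) (k : Fin d)
    (p : ℝ) (hp : 0 < p) (u : Fin d → ℝ) :
    fderiv ℝ (fun x : ℝ × (Fin d → ℝ) => entropyFlux d k x.1 x.2) (p, u) =
      ∑ α : Fin (d + 1), entropyVars d p u α •
        fderiv ℝ (fun x : ℝ × (Fin d → ℝ) => flux d k x.1 x.2 α) (p, u) :=
  entropyFlux_compatible_general d k p hp u
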